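/- Let H be a finite connected simple graph on n vertices with n ∈ {5, 6}. If the complement of H has maximum degree greater than 1, then H is a weak König–Egerváry graph. -/
import Mathlib


open SimpleGraph

variable {V : Type*}

/-- `M` is a matching of `H`: a set of pairwise disjoint edges of `H`. -/
def IsMatchingSet [DecidableEq V] (H : SimpleGraph V) (M : Finset (Sym2 V)) : Prop :=
  ↑M ⊆ H.edgeSet ∧ (M : Set (Sym2 V)).Pairwise fun e f => ∀ x ∈ e, x ∉ f

/-- `Q` is a vertex cover of `H`: a set of vertices meeting every edge of `H`. -/
def IsVertexCoverSet (H : SimpleGraph V) (Q : Finset V) : Prop :=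
  ∀ e ∈ H.edgeSet, ∃ x ∈ e, x ∈ Q

/-- `H` is a weak König--Egerváry graph: there are a matching `M` and a vertex set `Q`
with `|Q| ≤ |M|` such that `Q` is a vertex cover of `H - M`. -/
def WKE [DecidableEq V] (H : SimpleGraph V) : Prop :=
  ∃ (M : Finset (Sym2 V)) (Q : Finset V),
    IsMatchingSet H M ∧ Q.card ≤ M.card ∧ IsVertexCoverSet (H.deleteEdges ↑M) Q

set_option linter.unusedSectionVars false
set_option linter.unusedVariables false
set_option maxHeartbeats 1000000

section propaux

lemma not_and_not {A B : Prop} (h : ¬(¬A ∧ ¬B)) : A ∨ B := by tauto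

lemma swap12or {a b c : Prop} (h : a ∨ b ∨ c) : b ∨ a ∨ c := by tauto

lemma rot3or {a b c : Prop} (h : a ∨ b ∨ c) : c ∨ a ∨ b := by tauto

lemma sdr_core {Xu Xv Xw Yu Yv Yw Zu Zv Zw C : Prop}
    (hXu : Xu)
    (hcv : (Xv ∧ Yv) ∨ (Xv ∧ Zv) ∨ (Yv ∧ Zv))
    (hcw : (Xw ∧ Yw) ∨ (Xw ∧ Zw) ∨ (Yw ∧ Zw))
    (hby : Yu ∨ Yv ∨ Yw) (hbz : Zu ∨ Zv ∨ Zw)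
    (k1 : Xu → Yv → Zw → C) (k2 : Xu → Yw → Zv → C) (k3 : Xv → Yu → Zw → C)
    (k4 : Xv → Yw → Zu → C) (k5 : Xw → Yu → Zv → C) (k6 : Xw → Yv → Zu → C) : C := by
  have hv' : Yv ∨ Zv := by
    rcases hcv with ⟨_, h⟩ | ⟨_, h⟩ | ⟨h, _⟩
    exacts [Or.inl h, Or.inr h, Or.inl h]
  have hw' : Yw ∨ Zw := by
    rcases hcw with ⟨_, h⟩ | ⟨_, h⟩ | ⟨h, _⟩
    exacts [Or.inl h, Or.inr h, Or.inl h]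
  have hvx : Xv ∨ Zv := by
    rcases hcv with ⟨h, _⟩ | ⟨h, _⟩ | ⟨_, h⟩
    exacts [Or.inl h, Or.inl h, Or.inr h]
  have hvy : Xv ∨ Yv := by
    rcases hcv with ⟨h, _⟩ | ⟨h, _⟩ | ⟨h, _⟩
    exacts [Or.inl h, Or.inl h, Or.inr h]
  rcases hv' with hv | hv
  · rcases hw' with hw | hw
    · rcases hbz with hz | hz | hz
      · rcases hvx with h | h
        · exact k4 h hw hz
        · exact k2 hXu hw h
      · exact k2 hXu hw hz
      · exact k1 hXu hv hz
    · exact k1 hXu hv hw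
  · rcases hw' with hw | hw
    · exact k2 hXu hw hv
    · rcases hby with hy | hy | hy
      · rcases hvy with h | h
        · exact k3 h hy hw
        · exact k1 hXu h hw
      · exact k1 hXu hy hw
      · exact k2 hXu hy hv

lemma sdrK2 {Yu Yv Yw Zu Zv Zw C : Prop}
    (c1 : Yu ∨ Zu) (c2 : Yv ∨ Zv) (c3 : Yw ∨ Zw)
    (hAy : Yu ∨ Yv ∨ Yw) (hAz : Zu ∨ Zv ∨ Zw)
    (k1 : Yu → Zv → C) (k2 : Yu → Zw → C) (k3 : Yv → Zu → C)
    (k4 : Yv → Zw → C) (k5 : Yw → Zu → C) (k6 : Yw → Zv → C) : C := by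
  rcases hAy with hy | hy | hy
  · rcases hAz with hz | hz | hz
    · rcases c2 with h | h
      · exact k3 h hz
      · exact k1 hy h
    · exact k1 hy hz
    · exact k2 hy hz
  · rcases hAz with hz | hz | hz
    · exact k3 hy hz
    · rcases c1 with h | h
      · exact k1 h hz
      · exact k3 hy h
    · exact k4 hy hz
  · rcases hAz with hz | hz | hz
    · exact k5 hy hz
    · exact k6 hy hz
    · rcases c1 with h | h
      · exact k2 h hz
      · exact k5 hy h

end propaux

namespace WkeAux

variable [Fintype V] [DecidableEq V] {H : SimpleGraph V}

lemma exists_adj (hconn : H.Connected) (hV : 1 < Fintype.card V) (v : V) :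
    ∃ w, H.Adj v w := by
  obtain ⟨w, hw⟩ := Fintype.exists_ne_of_one_lt_card hV v
  obtain ⟨p⟩ := hconn.preconnected v w
  cases p with
  | nil => exact absurd rfl hw.symm
  | cons h _ => exact ⟨_, h⟩

lemma exists_fresh (s : Finset V) (h : s.card < Fintype.card V) : ∃ d, d ∉ s := by
  by_contra hno
  push_neg at hno
  have h2 := Finset.card_le_card (fun d _ => hno d : (Finset.univ : Finset V) ⊆ s)
  simp only [Finset.card_univ] at h2
  omega

lemma card2' {a b : V} (h1 : a ≠ b) : ({a,b} : Finset V).card = 2 := by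
  rw [Finset.card_insert_of_notMem (by simp [h1]), Finset.card_singleton]

lemma card3' {a b c : V} (h1 : a ≠ b) (h2 : a ≠ c) (h3 : b ≠ c) :
    ({a,b,c} : Finset V).card = 3 := by
  rw [Finset.card_insert_of_notMem (by simp [h1, h2]), card2' h3]

lemma card4' {a b c d : V} (h1 : a ≠ b) (h2 : a ≠ c) (h3 : a ≠ d) (h4 : b ≠ c) (h5 : b ≠ d)
    (h6 : c ≠ d) : ({a,b,c,d} : Finset V).card = 4 := by
  rw [Finset.card_insert_of_notMem (by simp [h1, h2, h3]), card3' h4 h5 h6]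

lemma matching_one {a b : V} (hab : H.Adj a b) :
    IsMatchingSet H {s(a,b)} ∧ ({s(a,b)} : Finset (Sym2 V)).card = 1 := by
  refine ⟨⟨?_, ?_⟩, Finset.card_singleton _⟩
  · intro e he; simp only [Finset.coe_singleton, Set.mem_singleton_iff] at he
    subst he; exact hab
  · simp only [Finset.coe_singleton]; exact Set.pairwise_singleton _ _

lemma matching_two {a b c d : V} (hab : H.Adj a b) (hcd : H.Adj c d)
    (h1 : a ≠ c) (h2 : a ≠ d) (h3 : b ≠ c) (h4 : b ≠ d) :
    IsMatchingSet H {s(a,b), s(c,d)} ∧ ({s(a,b), s(c,d)} : Finset (Sym2 V)).card = 2 := by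
  have hne : s(a,b) ≠ s(c,d) := by simp [Sym2.eq_iff]; tauto
  refine ⟨⟨?_, ?_⟩, ?_⟩
  · intro e he
    simp only [Finset.coe_insert, Finset.coe_singleton, Set.mem_insert_iff,
      Set.mem_singleton_iff] at he
    rcases he with rfl | rfl
    · exact hab
    · exact hcd
  · intro e he f hf hef
    simp only [Finset.coe_insert, Finset.coe_singleton, Set.mem_insert_iff,
      Set.mem_singleton_iff] at he hf
    rcases he with rfl | rfl <;> rcases hf with rfl | rfl <;>
      first
      | exact absurd rfl hef
      | (intro x hx hx'; simp only [Sym2.mem_iff] at hx hx'; rcases hx with rfl | rfl <;>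
          rcases hx' with h | h <;> simp_all)
  · rw [Finset.card_insert_of_notMem (by simpa using hne), Finset.card_singleton]

lemma matching_three {a b c d e f : V} (hab : H.Adj a b) (hcd : H.Adj c d) (hef : H.Adj e f)
    (h1 : a ≠ c) (h2 : a ≠ d) (h3 : b ≠ c) (h4 : b ≠ d)
    (h5 : a ≠ e) (h6 : a ≠ f) (h7 : b ≠ e) (h8 : b ≠ f)
    (h9 : c ≠ e) (h10 : c ≠ f) (h11 : d ≠ e) (h12 : d ≠ f) :
    IsMatchingSet H {s(a,b), s(c,d), s(e,f)} ∧
      ({s(a,b), s(c,d), s(e,f)} : Finset (Sym2 V)).card = 3 := by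
  have hne1 : s(a,b) ≠ s(c,d) := by simp [Sym2.eq_iff]; tauto
  have hne2 : s(a,b) ≠ s(e,f) := by simp [Sym2.eq_iff]; tauto
  have hne3 : s(c,d) ≠ s(e,f) := by simp [Sym2.eq_iff]; tauto
  refine ⟨⟨?_, ?_⟩, ?_⟩
  · intro x hx
    simp only [Finset.coe_insert, Finset.coe_singleton, Set.mem_insert_iff,
      Set.mem_singleton_iff] at hx
    rcases hx with rfl | rfl | rfl
    · exact hab
    · exact hcd
    · exact hef
  · intro x hx y hy hxy
    simp only [Finset.coe_insert, Finset.coe_singleton, Set.mem_insert_iff,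
      Set.mem_singleton_iff] at hx hy
    rcases hx with rfl | rfl | rfl <;> rcases hy with rfl | rfl | rfl <;>
      first
      | exact absurd rfl hxy
      | (intro x hx hx'; simp only [Sym2.mem_iff] at hx hx'; rcases hx with rfl | rfl <;>
          rcases hx' with h | h <;> simp_all)
  · rw [Finset.card_insert_of_notMem (by simp [hne1, hne2]),
      Finset.card_insert_of_notMem (by simpa using hne3), Finset.card_singleton]

lemma wke_of_S (M : Finset (Sym2 V)) (S : Finset V)
    (hM : IsMatchingSet H M) (hcard : Fintype.card V ≤ M.card + S.card)
    (hS : ∀ p q, p ∈ S → q ∈ S → H.Adj p q → s(p,q) ∈ M) : WKE H := by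
  refine ⟨M, Sᶜ, hM, ?_, ?_⟩
  · rw [Finset.card_compl]; omega
  · intro e he
    rw [edgeSet_deleteEdges] at he
    induction e using Sym2.ind with
    | _ p q =>
      obtain ⟨hadj, hnM⟩ := he
      rw [mem_edgeSet] at hadj
      by_cases hp : p ∈ S
      · by_cases hq : q ∈ S
        · exact absurd (hS p q hp hq hadj) (by simpa using hnM)
        · exact ⟨q, Sym2.mem_mk_right _ _, Finset.mem_compl.mpr hq⟩
      · exact ⟨p, Sym2.mem_mk_left _ _, Finset.mem_compl.mpr hp⟩

lemma wke_of_Q (M : Finset (Sym2 V)) (Q : Finset V)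
    (hM : IsMatchingSet H M) (hcard : Q.card ≤ M.card)
    (hQ : ∀ p q, H.Adj p q → p ∈ Q ∨ q ∈ Q) : WKE H := by
  refine ⟨M, Q, hM, hcard, ?_⟩
  intro e he
  rw [edgeSet_deleteEdges] at he
  induction e using Sym2.ind with
  | _ p q =>
    rw [Set.mem_diff, mem_edgeSet] at he
    rcases hQ p q he.1 with h | h
    · exact ⟨p, Sym2.mem_mk_left _ _, h⟩
    · exact ⟨q, Sym2.mem_mk_right _ _, h⟩

lemma wke2S (a b c d : V) (S : Finset V) (hab : H.Adj a b) (hcd : H.Adj c d)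
    (h1 : a ≠ c) (h2 : a ≠ d) (h3 : b ≠ c) (h4 : b ≠ d)
    (hcard : Fintype.card V ≤ 2 + S.card)
    (hS : ∀ p q, p ∈ S → q ∈ S → H.Adj p q →
      s(p,q) ∈ ({s(a,b), s(c,d)} : Finset (Sym2 V))) : WKE H := by
  obtain ⟨hM, hMc⟩ := matching_two hab hcd h1 h2 h3 h4
  exact wke_of_S _ S hM (by rw [hMc]; omega) hS

lemma wke3S (a b c d e f : V) (S : Finset V) (hab : H.Adj a b) (hcd : H.Adj c d) (hef : H.Adj e f)
    (h1 : a ≠ c) (h2 : a ≠ d) (h3 : b ≠ c) (h4 : b ≠ d)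
    (h5 : a ≠ e) (h6 : a ≠ f) (h7 : b ≠ e) (h8 : b ≠ f)
    (h9 : c ≠ e) (h10 : c ≠ f) (h11 : d ≠ e) (h12 : d ≠ f)
    (hcard : Fintype.card V ≤ 3 + S.card)
    (hS : ∀ p q, p ∈ S → q ∈ S → H.Adj p q →
      s(p,q) ∈ ({s(a,b), s(c,d), s(e,f)} : Finset (Sym2 V))) : WKE H := by
  obtain ⟨hM, hMc⟩ := matching_three hab hcd hef h1 h2 h3 h4 h5 h6 h7 h8 h9 h10 h11 h12
  exact wke_of_S _ S hM (by rw [hMc]; omega) hS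

lemma wke2Q (a b c d e1 e2 : V) (hab : H.Adj a b) (hcd : H.Adj c d)
    (h1 : a ≠ c) (h2 : a ≠ d) (h3 : b ≠ c) (h4 : b ≠ d)
    (hQ : ∀ p q, H.Adj p q → p = e1 ∨ p = e2 ∨ q = e1 ∨ q = e2) : WKE H := by
  obtain ⟨hM, hMc⟩ := matching_two hab hcd h1 h2 h3 h4
  refine wke_of_Q _ {e1, e2} hM ?_ ?_
  · rw [hMc]
    exact le_trans (Finset.card_insert_le _ _) (by simp)
  · intro p q h
    rcases hQ p q h with rfl | rfl | rfl | rfl <;> simp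

lemma wke1Q (c d : V) (hcd : H.Adj c d)
    (hQ : ∀ p q, H.Adj p q → p = c ∨ q = c) : WKE H := by
  obtain ⟨hM, hMc⟩ := matching_one hcd
  refine wke_of_Q _ {c} hM (by simp [hMc]) ?_
  intro p q h
  rcases hQ p q h with rfl | rfl <;> simp

lemma star_of_no_two_disjoint (hconn : H.Connected) (h4 : 4 ≤ Fintype.card V)
    (h : ∀ a b c d, H.Adj a b → H.Adj c d → a = c ∨ a = d ∨ b = c ∨ b = d) :
    ∃ c, ∀ p q, H.Adj p q → p = c ∨ q = c := by
  have h2 : 1 < Fintype.card V := by omega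
  obtain ⟨v0⟩ := hconn.nonempty
  obtain ⟨b, hab⟩ := exists_adj hconn h2 v0
  set a := v0 with ha
  by_cases hA : ∀ p q, H.Adj p q → p = a ∨ q = a
  · exact ⟨a, hA⟩
  by_cases hB : ∀ p q, H.Adj p q → p = b ∨ q = b
  · exact ⟨b, hB⟩
  push_neg at hA hB
  obtain ⟨p, q, hpq, hpa, hqa⟩ := hA
  obtain ⟨p', q', hpq', hpb, hqb⟩ := hB
  have h1 : p = b ∨ q = b := by
    rcases h p q a b hpq hab with h' | h' | h' | h' <;> tauto
  have h1' : p' = a ∨ q' = a := by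
    rcases h p' q' a b hpq' hab with h' | h' | h' | h' <;> tauto
  obtain ⟨t, hbt, hta, htb⟩ : ∃ t, H.Adj b t ∧ t ≠ a ∧ t ≠ b := by
    rcases h1 with rfl | rfl
    · exact ⟨q, hpq, hqa, hpq.ne'⟩
    · exact ⟨p, hpq.symm, hpa, hpq.ne⟩
  obtain ⟨r, har, hra, hrb⟩ : ∃ r, H.Adj a r ∧ r ≠ a ∧ r ≠ b := by
    rcases h1' with rfl | rfl
    · exact ⟨q', hpq', hpq'.ne', hqb⟩
    · exact ⟨p', hpq'.symm, hpq'.ne, hpb⟩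
  have htr : t = r := by
    rcases h b t a r hbt har with h' | h' | h' | h' <;> first | exact h' | simp_all
  subst htr
  have hcard3 : ({a, b, t} : Finset V).card ≤ 3 := by
    apply (Finset.card_insert_le _ _).trans
    apply Nat.succ_le_succ
    apply (Finset.card_insert_le _ _).trans
    simp
  obtain ⟨d, hd⟩ := exists_fresh {a, b, t} (by omega)
  simp only [Finset.mem_insert, Finset.mem_singleton, not_or] at hd
  obtain ⟨hda, hdb, hdt⟩ := hd
  obtain ⟨s, hds⟩ := exists_adj hconn h2 d
  exfalso
  have e1 : d = a ∨ d = b ∨ s = a ∨ s = b := h d s a b hds hab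
  have e2 : d = a ∨ d = t ∨ s = a ∨ s = t := h d s a t hds har
  have e3 : d = b ∨ d = t ∨ s = b ∨ s = t := h d s b t hds hbt
  have hs1 : s = a ∨ s = b := by
    rcases e1 with h' | h' | h' | h'
    exacts [absurd h' hda, absurd h' hdb, Or.inl h', Or.inr h']
  have hs2 : s = a ∨ s = t := by
    rcases e2 with h' | h' | h' | h'
    exacts [absurd h' hda, absurd h' hdt, Or.inl h', Or.inr h']
  have hs3 : s = b ∨ s = t := by
    rcases e3 with h' | h' | h' | h'
    exacts [absurd h' hdb, absurd h' hdt, Or.inl h', Or.inr h']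
  rcases hs1 with rfl | rfl
  · rcases hs3 with h' | h'
    · exact hab.ne h'
    · exact hta h'.symm
  · rcases hs2 with h' | h'
    · exact hab.ne h'.symm
    · exact htb h'.symm

lemma wke_star (hconn : H.Connected) (hV : 1 < Fintype.card V)
    (hc : ∃ c, ∀ p q, H.Adj p q → p = c ∨ q = c) : WKE H := by
  obtain ⟨c, hc⟩ := hc
  obtain ⟨d, hcd⟩ := exists_adj hconn hV c
  exact wke1Q c d hcd hc

lemma three_rest (hcard : Fintype.card V = 6) (x y z : V) (hxy : x ≠ y) (hxz : x ≠ z)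
    (hyz : y ≠ z) :
    ∃ u v w : V, u ≠ x ∧ u ≠ y ∧ u ≠ z ∧ v ≠ x ∧ v ≠ y ∧ v ≠ z ∧ w ≠ x ∧ w ≠ y ∧ w ≠ z ∧
      u ≠ v ∧ u ≠ w ∧ v ≠ w ∧ ∀ r : V, r = x ∨ r = y ∨ r = z ∨ r = u ∨ r = v ∨ r = w := by
  set T := ({x,y,z} : Finset V)ᶜ with hT
  have hTcard : T.card = 3 := by
    rw [hT, Finset.card_compl, card3' hxy hxz hyz, hcard]
  obtain ⟨u, hu⟩ := Finset.card_pos.mp (by omega : 0 < T.card)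
  obtain ⟨v, hv⟩ := Finset.card_pos.mp
    (by rw [Finset.card_erase_of_mem hu]; omega : 0 < (T.erase u).card)
  obtain ⟨w, hw⟩ := Finset.card_pos.mp
    (by rw [Finset.card_erase_of_mem hv, Finset.card_erase_of_mem hu]; omega :
      0 < ((T.erase u).erase v).card)
  have hvT : v ∈ T := Finset.mem_of_mem_erase hv
  have hwT : w ∈ T := Finset.mem_of_mem_erase (Finset.mem_of_mem_erase hw)
  have hvu : v ≠ u := Finset.ne_of_mem_erase hv
  have hwv : w ≠ v := Finset.ne_of_mem_erase hw
  have hwu : w ≠ u := Finset.ne_of_mem_erase (Finset.mem_of_mem_erase hw)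
  have notmem : ∀ r ∈ T, r ≠ x ∧ r ≠ y ∧ r ≠ z := by
    intro r hr
    rw [hT, Finset.mem_compl] at hr
    simp only [Finset.mem_insert, Finset.mem_singleton, not_or] at hr
    exact hr
  obtain ⟨hux, huy, huz⟩ := notmem u hu
  obtain ⟨hvx, hvy, hvz⟩ := notmem v hvT
  obtain ⟨hwx, hwy, hwz⟩ := notmem w hwT
  refine ⟨u, v, w, hux, huy, huz, hvx, hvy, hvz, hwx, hwy, hwz, hvu.symm, hwu.symm, hwv.symm, ?_⟩
  have hsub : ({u,v,w} : Finset V) ⊆ T := by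
    intro r hr
    simp only [Finset.mem_insert, Finset.mem_singleton] at hr
    rcases hr with rfl | rfl | rfl <;> assumption
  have heq : ({u,v,w} : Finset V) = T :=
    Finset.eq_of_subset_of_card_le hsub (by rw [hTcard, card3' hvu.symm hwu.symm hwv.symm])
  intro r
  by_cases hr : r ∈ ({x,y,z} : Finset V)
  · simp only [Finset.mem_insert, Finset.mem_singleton] at hr; tauto
  · have : r ∈ ({u,v,w} : Finset V) := by rw [heq, hT, Finset.mem_compl]; exact hr
    simp only [Finset.mem_insert, Finset.mem_singleton] at this; tauto

lemma two_rest (hcard : Fintype.card V = 5) (x y z : V) (hxy : x ≠ y) (hxz : x ≠ z)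
    (hyz : y ≠ z) :
    ∃ u v : V, u ≠ x ∧ u ≠ y ∧ u ≠ z ∧ v ≠ x ∧ v ≠ y ∧ v ≠ z ∧ u ≠ v ∧
      ∀ r : V, r = x ∨ r = y ∨ r = z ∨ r = u ∨ r = v := by
  set T := ({x,y,z} : Finset V)ᶜ with hT
  have hTcard : T.card = 2 := by
    rw [hT, Finset.card_compl, card3' hxy hxz hyz, hcard]
  obtain ⟨u, hu⟩ := Finset.card_pos.mp (by omega : 0 < T.card)
  obtain ⟨v, hv⟩ := Finset.card_pos.mp
    (by rw [Finset.card_erase_of_mem hu]; omega : 0 < (T.erase u).card)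
  have hvT : v ∈ T := Finset.mem_of_mem_erase hv
  have hvu : v ≠ u := Finset.ne_of_mem_erase hv
  have notmem : ∀ r ∈ T, r ≠ x ∧ r ≠ y ∧ r ≠ z := by
    intro r hr
    rw [hT, Finset.mem_compl] at hr
    simp only [Finset.mem_insert, Finset.mem_singleton, not_or] at hr
    exact hr
  obtain ⟨hux, huy, huz⟩ := notmem u hu
  obtain ⟨hvx, hvy, hvz⟩ := notmem v hvT
  refine ⟨u, v, hux, huy, huz, hvx, hvy, hvz, hvu.symm, ?_⟩
  have hsub : ({u,v} : Finset V) ⊆ T := by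
    intro r hr
    simp only [Finset.mem_insert, Finset.mem_singleton] at hr
    rcases hr with rfl | rfl <;> assumption
  have heq : ({u,v} : Finset V) = T :=
    Finset.eq_of_subset_of_card_le hsub (by rw [hTcard, card2' hvu.symm])
  intro r
  by_cases hr : r ∈ ({x,y,z} : Finset V)
  · simp only [Finset.mem_insert, Finset.mem_singleton] at hr; tauto
  · have : r ∈ ({u,v} : Finset V) := by rw [heq, hT, Finset.mem_compl]; exact hr
    simp only [Finset.mem_insert, Finset.mem_singleton] at this; tauto

end WkeAux



section cases
variable [Fintype V] [DecidableEq V] {H : SimpleGraph V}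
open WkeAux

lemma caseIa_edge (hcard : Fintype.card V = 6) (x y z t : V)
    (dxy : x ≠ y) (dxz : x ≠ z) (dyz : y ≠ z) (dtx : t ≠ x) (dty : t ≠ y) (dtz : t ≠ z)
    (hxy : ¬H.Adj x y) (hxz : ¬H.Adj x z) (hyz : ¬H.Adj y z)
    (hyt : ¬H.Adj y t) (hzt : ¬H.Adj z t) (hxt : H.Adj x t)
    (a b c d : V) (hab : H.Adj a b) (hcd : H.Adj c d)
    (n1 : a ≠ c) (n2 : a ≠ d) (n3 : b ≠ c) (n4 : b ≠ d) : WKE H := by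
  by_cases hf : ∃ p q, H.Adj p q ∧ p ≠ x ∧ p ≠ t ∧ q ≠ x ∧ q ≠ t
  · obtain ⟨p, q, hpq, m1, m2, m3, m4⟩ := hf
    refine wke2S x t p q {x,y,z,t} hxt hpq m1.symm m3.symm m2.symm m4.symm ?_ ?_
    · rw [card4' dxy dxz dtx.symm dyz dty.symm dtz.symm]; omega
    · intro p' q' hp hq hadj
      simp only [Finset.mem_insert, Finset.mem_singleton] at hp hq
      rcases hp with rfl | rfl | rfl | rfl <;> rcases hq with rfl | rfl | rfl | rfl <;>
        simp_all [Sym2.eq_iff, SimpleGraph.adj_comm, SimpleGraph.irrefl]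
  · push_neg at hf
    refine wke2Q a b c d x t hab hcd n1 n2 n3 n4 ?_
    intro p q h
    by_cases h1 : p = x
    · exact Or.inl h1
    by_cases h2 : p = t
    · exact Or.inr (Or.inl h2)
    by_cases h3 : q = x
    · exact Or.inr (Or.inr (Or.inl h3))
    exact Or.inr (Or.inr (Or.inr (hf p q h h1 h2 h3)))

lemma caseIa (hconn : H.Connected) (hcard : Fintype.card V = 6) (x y z t : V)
    (dxy : x ≠ y) (dxz : x ≠ z) (dyz : y ≠ z) (dtx : t ≠ x) (dty : t ≠ y) (dtz : t ≠ z)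
    (hxy : ¬H.Adj x y) (hxz : ¬H.Adj x z) (hyz : ¬H.Adj y z)
    (hnc : ¬((H.Adj x t ∧ H.Adj y t) ∨ (H.Adj x t ∧ H.Adj z t) ∨ (H.Adj y t ∧ H.Adj z t))) :
    WKE H := by
  by_cases h2d : ∃ a b c d, H.Adj a b ∧ H.Adj c d ∧ a ≠ c ∧ a ≠ d ∧ b ≠ c ∧ b ≠ d
  · obtain ⟨a, b, c, d, hab, hcd, n1, n2, n3, n4⟩ := h2d
    by_cases htx : H.Adj x t
    · have hty : ¬H.Adj y t := fun h => hnc (Or.inl ⟨htx, h⟩)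
      have htz : ¬H.Adj z t := fun h => hnc (Or.inr (Or.inl ⟨htx, h⟩))
      exact caseIa_edge hcard x y z t dxy dxz dyz dtx dty dtz hxy hxz hyz hty htz htx
        a b c d hab hcd n1 n2 n3 n4
    · by_cases hty : H.Adj y t
      · have htz : ¬H.Adj z t := fun h => hnc (Or.inr (Or.inr ⟨hty, h⟩))
        exact caseIa_edge hcard y x z t dxy.symm dyz dxz dty dtx dtz
          (fun h => hxy h.symm) hyz hxz htx htz hty a b c d hab hcd n1 n2 n3 n4
      · by_cases htz : H.Adj z t
        · exact caseIa_edge hcard z x y t dxz.symm dyz.symm dxy dtz dtx dty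
            (fun h => hxz h.symm) (fun h => hyz h.symm) hxy htx hty htz
            a b c d hab hcd n1 n2 n3 n4
        · refine wke2S a b c d {x,y,z,t} hab hcd n1 n2 n3 n4 ?_ ?_
          · rw [card4' dxy dxz dtx.symm dyz dty.symm dtz.symm]; omega
          · intro p' q' hp hq hadj
            simp only [Finset.mem_insert, Finset.mem_singleton] at hp hq
            rcases hp with rfl | rfl | rfl | rfl <;> rcases hq with rfl | rfl | rfl | rfl <;>
              simp_all [Sym2.eq_iff, SimpleGraph.adj_comm, SimpleGraph.irrefl]
  · push_neg at h2d
    have h' : ∀ a b c d, H.Adj a b → H.Adj c d → a = c ∨ a = d ∨ b = c ∨ b = d := by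
      intro a b c d h1 h2
      by_cases e1 : a = c
      · exact Or.inl e1
      by_cases e2 : a = d
      · exact Or.inr (Or.inl e2)
      by_cases e3 : b = c
      · exact Or.inr (Or.inr (Or.inl e3))
      exact Or.inr (Or.inr (Or.inr (h2d a b c d h1 h2 e1 e2 e3)))
    exact wke_star hconn (by omega) (star_of_no_two_disjoint hconn (by omega) h')

lemma leafPM (hcard : Fintype.card V = 6) (x y z p q r : V)
    (hxp : H.Adj x p) (hyq : H.Adj y q) (hzr : H.Adj z r)
    (hxy : ¬H.Adj x y) (hxz : ¬H.Adj x z) (hyz : ¬H.Adj y z)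
    (dxy : x ≠ y) (dxz : x ≠ z) (dyz : y ≠ z)
    (dpy : p ≠ y) (dpz : p ≠ z) (dpq : p ≠ q) (dpr : p ≠ r)
    (dqx : q ≠ x) (dqz : q ≠ z) (dqr : q ≠ r) (drx : r ≠ x) (dry : r ≠ y) : WKE H := by
  refine wke3S x p y q z r {x,y,z} hxp hyq hzr dxy dqx.symm dpy dpq dxz drx.symm dpz dpr
    dyz dry.symm dqz dqr ?_ ?_
  · rw [card3' dxy dxz dyz]; omega
  · intro p' q' hp hq hadj
    simp only [Finset.mem_insert, Finset.mem_singleton] at hp hq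
    rcases hp with rfl | rfl | rfl <;> rcases hq with rfl | rfl | rfl <;>
      simp_all [Sym2.eq_iff, SimpleGraph.adj_comm, SimpleGraph.irrefl]

lemma caseI (hconn : H.Connected) (hcard : Fintype.card V = 6) (x y z : V)
    (dxy : x ≠ y) (dxz : x ≠ z) (dyz : y ≠ z)
    (hxy : ¬H.Adj x y) (hxz : ¬H.Adj x z) (hyz : ¬H.Adj y z) : WKE H := by
  obtain ⟨u, v, w, hux, huy, huz, hvx, hvy, hvz, hwx, hwy, hwz, huv, huw, hvw, huniv⟩ :=
    three_rest hcard x y z dxy dxz dyz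
  by_cases hcu : (H.Adj x u ∧ H.Adj y u) ∨ (H.Adj x u ∧ H.Adj z u) ∨ (H.Adj y u ∧ H.Adj z u)
  swap
  · exact caseIa hconn hcard x y z u dxy dxz dyz hux huy huz hxy hxz hyz hcu
  by_cases hcv : (H.Adj x v ∧ H.Adj y v) ∨ (H.Adj x v ∧ H.Adj z v) ∨ (H.Adj y v ∧ H.Adj z v)
  swap
  · exact caseIa hconn hcard x y z v dxy dxz dyz hvx hvy hvz hxy hxz hyz hcv
  by_cases hcw : (H.Adj x w ∧ H.Adj y w) ∨ (H.Adj x w ∧ H.Adj z w) ∨ (H.Adj y w ∧ H.Adj z w)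
  swap
  · exact caseIa hconn hcard x y z w dxy dxz dyz hwx hwy hwz hxy hxz hyz hcw
  have hbx : H.Adj x u ∨ H.Adj x v ∨ H.Adj x w := by
    obtain ⟨r, hr⟩ := exists_adj hconn (by omega) x
    rcases huniv r with rfl | rfl | rfl | rfl | rfl | rfl
    · exact absurd hr H.irrefl
    · exact absurd hr hxy
    · exact absurd hr hxz
    · exact Or.inl hr
    · exact Or.inr (Or.inl hr)
    · exact Or.inr (Or.inr hr)
  have hby : H.Adj y u ∨ H.Adj y v ∨ H.Adj y w := by
    obtain ⟨r, hr⟩ := exists_adj hconn (by omega) y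
    rcases huniv r with rfl | rfl | rfl | rfl | rfl | rfl
    · exact absurd hr.symm hxy
    · exact absurd hr H.irrefl
    · exact absurd hr hyz
    · exact Or.inl hr
    · exact Or.inr (Or.inl hr)
    · exact Or.inr (Or.inr hr)
  have hbz : H.Adj z u ∨ H.Adj z v ∨ H.Adj z w := by
    obtain ⟨r, hr⟩ := exists_adj hconn (by omega) z
    rcases huniv r with rfl | rfl | rfl | rfl | rfl | rfl
    · exact absurd hr.symm hxz
    · exact absurd hr.symm hyz
    · exact absurd hr H.irrefl
    · exact Or.inl hr
    · exact Or.inr (Or.inl hr)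
    · exact Or.inr (Or.inr hr)
  rcases hbx with hX | hX | hX
  · exact sdr_core hX hcv hcw hby hbz
      (fun h1 h2 h3 => leafPM hcard x y z u v w h1 h2 h3 hxy hxz hyz dxy dxz dyz
        huy huz huv huw hvx hvz hvw hwx hwy)
      (fun h1 h2 h3 => leafPM hcard x y z u w v h1 h2 h3 hxy hxz hyz dxy dxz dyz
        huy huz huw huv hwx hwz hvw.symm hvx hvy)
      (fun h1 h2 h3 => leafPM hcard x y z v u w h1 h2 h3 hxy hxz hyz dxy dxz dyz
        hvy hvz huv.symm hvw hux huz huw hwx hwy)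
      (fun h1 h2 h3 => leafPM hcard x y z v w u h1 h2 h3 hxy hxz hyz dxy dxz dyz
        hvy hvz hvw huv.symm hwx hwz huw.symm hux huy)
      (fun h1 h2 h3 => leafPM hcard x y z w u v h1 h2 h3 hxy hxz hyz dxy dxz dyz
        hwy hwz huw.symm hvw.symm hux huz huv hvx hvy)
      (fun h1 h2 h3 => leafPM hcard x y z w v u h1 h2 h3 hxy hxz hyz dxy dxz dyz
        hwy hwz hvw.symm huw.symm hvx hvz huv.symm hux huy)
  · exact sdr_core hX hcu hcw (swap12or hby) (swap12or hbz)
      (fun h1 h2 h3 => leafPM hcard x y z v u w h1 h2 h3 hxy hxz hyz dxy dxz dyz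
        hvy hvz huv.symm hvw hux huz huw hwx hwy)
      (fun h1 h2 h3 => leafPM hcard x y z v w u h1 h2 h3 hxy hxz hyz dxy dxz dyz
        hvy hvz hvw huv.symm hwx hwz huw.symm hux huy)
      (fun h1 h2 h3 => leafPM hcard x y z u v w h1 h2 h3 hxy hxz hyz dxy dxz dyz
        huy huz huv huw hvx hvz hvw hwx hwy)
      (fun h1 h2 h3 => leafPM hcard x y z u w v h1 h2 h3 hxy hxz hyz dxy dxz dyz
        huy huz huw huv hwx hwz hvw.symm hvx hvy)
      (fun h1 h2 h3 => leafPM hcard x y z w v u h1 h2 h3 hxy hxz hyz dxy dxz dyz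
        hwy hwz hvw.symm huw.symm hvx hvz huv.symm hux huy)
      (fun h1 h2 h3 => leafPM hcard x y z w u v h1 h2 h3 hxy hxz hyz dxy dxz dyz
        hwy hwz huw.symm hvw.symm hux huz huv hvx hvy)
  · exact sdr_core hX hcu hcv (rot3or hby) (rot3or hbz)
      (fun h1 h2 h3 => leafPM hcard x y z w u v h1 h2 h3 hxy hxz hyz dxy dxz dyz
        hwy hwz huw.symm hvw.symm hux huz huv hvx hvy)
      (fun h1 h2 h3 => leafPM hcard x y z w v u h1 h2 h3 hxy hxz hyz dxy dxz dyz
        hwy hwz hvw.symm huw.symm hvx hvz huv.symm hux huy)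
      (fun h1 h2 h3 => leafPM hcard x y z u w v h1 h2 h3 hxy hxz hyz dxy dxz dyz
        huy huz huw huv hwx hwz hvw.symm hvx hvy)
      (fun h1 h2 h3 => leafPM hcard x y z u v w h1 h2 h3 hxy hxz hyz dxy dxz dyz
        huy huz huv huw hvx hvz hvw hwx hwy)
      (fun h1 h2 h3 => leafPM hcard x y z v w u h1 h2 h3 hxy hxz hyz dxy dxz dyz
        hvy hvz hvw huv.symm hwx hwz huw.symm hux huy)
      (fun h1 h2 h3 => leafPM hcard x y z v u w h1 h2 h3 hxy hxz hyz dxy dxz dyz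
        hvy hvz huv.symm hvw hux huz huw hwx hwy)

end cases

section casesK
variable [Fintype V] [DecidableEq V] {H : SimpleGraph V}
open WkeAux

lemma caseK4 (hconn : H.Connected) (hcard : Fintype.card V = 6) (x y z k1 k2 a : V)
    (hxy : ¬H.Adj x y) (hxz : ¬H.Adj x z) (hyz : H.Adj y z)
    (hxk1 : ¬H.Adj x k1) (hxk2 : ¬H.Adj x k2) (hxa : H.Adj x a)
    (dxy : x ≠ y) (dxz : x ≠ z) (dyz : y ≠ z)
    (dk1x : k1 ≠ x) (dk1y : k1 ≠ y) (dk1z : k1 ≠ z)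
    (dk2x : k2 ≠ x) (dk2y : k2 ≠ y) (dk2z : k2 ≠ z) (dk12 : k1 ≠ k2)
    (day : a ≠ y) (daz : a ≠ z) (dak1 : a ≠ k1) (dak2 : a ≠ k2) : WKE H := by
  by_cases hkk : H.Adj k1 k2
  · refine wke3S x a y z k1 k2 {x,y,z} hxa hyz hkk dxy dxz day daz dk1x.symm dk2x.symm
      dak1 dak2 dk1y.symm dk2y.symm dk1z.symm dk2z.symm ?_ ?_
    · rw [card3' dxy dxz dyz]; omega
    · intro p' q' hp hq hadj
      simp only [Finset.mem_insert, Finset.mem_singleton] at hp hq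
      rcases hp with rfl | rfl | rfl <;> rcases hq with rfl | rfl | rfl <;>
        simp_all [Sym2.eq_iff, SimpleGraph.adj_comm, SimpleGraph.irrefl]
  · exact caseI hconn hcard x k1 k2 dk1x.symm dk2x.symm dk12 hxk1 hxk2 hkk

lemma caseK3 (hcard : Fintype.card V = 6) (x y z k a b : V)
    (hxy : ¬H.Adj x y) (hxz : ¬H.Adj x z) (hxk : ¬H.Adj x k)
    (hyz : H.Adj y z) (hyk : H.Adj y k) (hzk : H.Adj z k)
    (hxa : H.Adj x a) (hxb : H.Adj x b)
    (dxy : x ≠ y) (dxz : x ≠ z) (dyz : y ≠ z)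
    (dkx : k ≠ x) (dky : k ≠ y) (dkz : k ≠ z)
    (dax : a ≠ x) (day : a ≠ y) (daz : a ≠ z)
    (dbx : b ≠ x) (dby : b ≠ y) (dbz : b ≠ z)
    (dak : a ≠ k) (dbk : b ≠ k) (dab : a ≠ b) : WKE H := by
  by_cases h1 : ¬H.Adj y a ∧ ¬H.Adj z a
  · obtain ⟨h1y, h1z⟩ := h1
    refine wke2S x a y z {x,a,y,z} hxa hyz dxy dxz day daz ?_ ?_
    · rw [card4' dax.symm dxy dxz day daz dyz]; omega
    · intro p' q' hp hq hadj
      simp only [Finset.mem_insert, Finset.mem_singleton] at hp hq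
      rcases hp with rfl | rfl | rfl | rfl <;> rcases hq with rfl | rfl | rfl | rfl <;>
        simp_all [Sym2.eq_iff, SimpleGraph.adj_comm, SimpleGraph.irrefl]
  by_cases h2 : ¬H.Adj y b ∧ ¬H.Adj z b
  · obtain ⟨h2y, h2z⟩ := h2
    refine wke2S x b y z {x,b,y,z} hxb hyz dxy dxz dby dbz ?_ ?_
    · rw [card4' dbx.symm dxy dxz dby dbz dyz]; omega
    · intro p' q' hp hq hadj
      simp only [Finset.mem_insert, Finset.mem_singleton] at hp hq
      rcases hp with rfl | rfl | rfl | rfl <;> rcases hq with rfl | rfl | rfl | rfl <;>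
        simp_all [Sym2.eq_iff, SimpleGraph.adj_comm, SimpleGraph.irrefl]
  by_cases hka : H.Adj k a
  · refine wke3S x b y z k a {x,y,z} hxb hyz hka dxy dxz dby dbz dkx.symm dax.symm
      dbk dab.symm dky.symm day.symm dkz.symm daz.symm ?_ ?_
    · rw [card3' dxy dxz dyz]; omega
    · intro p' q' hp hq hadj
      simp only [Finset.mem_insert, Finset.mem_singleton] at hp hq
      rcases hp with rfl | rfl | rfl <;> rcases hq with rfl | rfl | rfl <;>
        simp_all [Sym2.eq_iff, SimpleGraph.adj_comm, SimpleGraph.irrefl]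
  by_cases hkb : H.Adj k b
  · refine wke3S x a y z k b {x,y,z} hxa hyz hkb dxy dxz day daz dkx.symm dbx.symm
      dak dab dky.symm dby.symm dkz.symm dbz.symm ?_ ?_
    · rw [card3' dxy dxz dyz]; omega
    · intro p' q' hp hq hadj
      simp only [Finset.mem_insert, Finset.mem_singleton] at hp hq
      rcases hp with rfl | rfl | rfl <;> rcases hq with rfl | rfl | rfl <;>
        simp_all [Sym2.eq_iff, SimpleGraph.adj_comm, SimpleGraph.irrefl]
  have hb : H.Adj y b ∨ H.Adj z b := not_and_not h2
  rcases hb with hb | hb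
  · -- M = {s(x,a), s(k,z), s(b,y)}, S = {x,a,k}
    refine wke3S x a k z b y {x,a,k} hxa hzk.symm hb.symm dkx.symm dxz dak daz
      dbx.symm dxy dab day dbk.symm dky dbz.symm dyz.symm ?_ ?_
    · rw [card3' dax.symm dkx.symm dak]; omega
    · intro p' q' hp hq hadj
      simp only [Finset.mem_insert, Finset.mem_singleton] at hp hq
      rcases hp with rfl | rfl | rfl <;> rcases hq with rfl | rfl | rfl <;>
        simp_all [Sym2.eq_iff, SimpleGraph.adj_comm, SimpleGraph.irrefl]
  · -- M = {s(x,a), s(k,y), s(b,z)}, S = {x,a,k}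
    refine wke3S x a k y b z {x,a,k} hxa hyk.symm hb.symm dkx.symm dxy dak day
      dbx.symm dxz dab daz dbk.symm dkz dby.symm dyz ?_ ?_
    · rw [card3' dax.symm dkx.symm dak]; omega
    · intro p' q' hp hq hadj
      simp only [Finset.mem_insert, Finset.mem_singleton] at hp hq
      rcases hp with rfl | rfl | rfl <;> rcases hq with rfl | rfl | rfl <;>
        simp_all [Sym2.eq_iff, SimpleGraph.adj_comm, SimpleGraph.irrefl]

end casesK

section casesK2
variable [Fintype V] [DecidableEq V] {H : SimpleGraph V}
open WkeAux

lemma caseK2 (hcard : Fintype.card V = 6) (x y z u v w : V)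
    (hxy : ¬H.Adj x y) (hxz : ¬H.Adj x z) (hyz : H.Adj y z)
    (hxu : H.Adj x u) (hxv : H.Adj x v) (hxw : H.Adj x w)
    (dxy : x ≠ y) (dxz : x ≠ z) (dyz : y ≠ z)
    (duy : u ≠ y) (duz : u ≠ z) (dvy : v ≠ y) (dvz : v ≠ z) (dwy : w ≠ y) (dwz : w ≠ z)
    (duv : u ≠ v) (duw : u ≠ w) (dvw : v ≠ w) : WKE H := by
  have dxu : x ≠ u := hxu.ne
  have dxv : x ≠ v := hxv.ne
  have dxw : x ≠ w := hxw.ne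
  by_cases d1 : ¬H.Adj y u ∧ ¬H.Adj z u
  · obtain ⟨a1, a2⟩ := d1
    refine wke2S x u y z {x,u,y,z} hxu hyz dxy dxz duy duz ?_ ?_
    · rw [card4' dxu dxy dxz duy duz dyz]; omega
    · intro p' q' hp hq hadj
      simp only [Finset.mem_insert, Finset.mem_singleton] at hp hq
      rcases hp with rfl | rfl | rfl | rfl <;> rcases hq with rfl | rfl | rfl | rfl <;>
        simp_all [Sym2.eq_iff, SimpleGraph.adj_comm, SimpleGraph.irrefl]
  by_cases d2 : ¬H.Adj y v ∧ ¬H.Adj z v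
  · obtain ⟨a1, a2⟩ := d2
    refine wke2S x v y z {x,v,y,z} hxv hyz dxy dxz dvy dvz ?_ ?_
    · rw [card4' dxv dxy dxz dvy dvz dyz]; omega
    · intro p' q' hp hq hadj
      simp only [Finset.mem_insert, Finset.mem_singleton] at hp hq
      rcases hp with rfl | rfl | rfl | rfl <;> rcases hq with rfl | rfl | rfl | rfl <;>
        simp_all [Sym2.eq_iff, SimpleGraph.adj_comm, SimpleGraph.irrefl]
  by_cases d3 : ¬H.Adj y w ∧ ¬H.Adj z w
  · obtain ⟨a1, a2⟩ := d3
    refine wke2S x w y z {x,w,y,z} hxw hyz dxy dxz dwy dwz ?_ ?_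
    · rw [card4' dxw dxy dxz dwy dwz dyz]; omega
    · intro p' q' hp hq hadj
      simp only [Finset.mem_insert, Finset.mem_singleton] at hp hq
      rcases hp with rfl | rfl | rfl | rfl <;> rcases hq with rfl | rfl | rfl | rfl <;>
        simp_all [Sym2.eq_iff, SimpleGraph.adj_comm, SimpleGraph.irrefl]
  by_cases euv : H.Adj u v
  · refine wke3S x w y z u v {x,y,z} hxw hyz euv dxy dxz dwy dwz dxu dxv
      duw.symm dvw.symm duy.symm dvy.symm duz.symm dvz.symm ?_ ?_
    · rw [card3' dxy dxz dyz]; omega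
    · intro p' q' hp hq hadj
      simp only [Finset.mem_insert, Finset.mem_singleton] at hp hq
      rcases hp with rfl | rfl | rfl <;> rcases hq with rfl | rfl | rfl <;>
        simp_all [Sym2.eq_iff, SimpleGraph.adj_comm, SimpleGraph.irrefl]
  by_cases euw : H.Adj u w
  · refine wke3S x v y z u w {x,y,z} hxv hyz euw dxy dxz dvy dvz dxu dxw
      duv.symm dvw duy.symm dwy.symm duz.symm dwz.symm ?_ ?_
    · rw [card3' dxy dxz dyz]; omega
    · intro p' q' hp hq hadj
      simp only [Finset.mem_insert, Finset.mem_singleton] at hp hq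
      rcases hp with rfl | rfl | rfl <;> rcases hq with rfl | rfl | rfl <;>
        simp_all [Sym2.eq_iff, SimpleGraph.adj_comm, SimpleGraph.irrefl]
  by_cases evw : H.Adj v w
  · refine wke3S x u y z v w {x,y,z} hxu hyz evw dxy dxz duy duz dxv dxw
      duv duw dvy.symm dwy.symm dvz.symm dwz.symm ?_ ?_
    · rw [card3' dxy dxz dyz]; omega
    · intro p' q' hp hq hadj
      simp only [Finset.mem_insert, Finset.mem_singleton] at hp hq
      rcases hp with rfl | rfl | rfl <;> rcases hq with rfl | rfl | rfl <;>
        simp_all [Sym2.eq_iff, SimpleGraph.adj_comm, SimpleGraph.irrefl]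
  by_cases hAy : H.Adj y u ∨ H.Adj y v ∨ H.Adj y w
  · by_cases hAz : H.Adj z u ∨ H.Adj z v ∨ H.Adj z w
    · have c1 : H.Adj y u ∨ H.Adj z u := not_and_not d1
      have c2 : H.Adj y v ∨ H.Adj z v := not_and_not d2
      have c3 : H.Adj y w ∨ H.Adj z w := not_and_not d3
      refine sdrK2 c1 c2 c3 hAy hAz ?_ ?_ ?_ ?_ ?_ ?_ <;> intro h1 h2
      -- k1 : y~u, z~v : M = {s(x,w), s(y,u), s(z,v)}, S = {u,v,w}
      · refine wke3S x w y u z v {u,v,w} hxw h1 h2 dxy dxu dwy duw.symm dxz dxv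
          dwz dvw.symm dyz dvy.symm duz duv ?_ ?_
        · rw [card3' duv duw dvw]; omega
        · intro p' q' hp hq hadj
          simp only [Finset.mem_insert, Finset.mem_singleton] at hp hq
          rcases hp with rfl | rfl | rfl <;> rcases hq with rfl | rfl | rfl <;>
            simp_all [Sym2.eq_iff, SimpleGraph.adj_comm, SimpleGraph.irrefl]
      -- k2 : y~u, z~w : M = {s(x,v), s(y,u), s(z,w)}
      · refine wke3S x v y u z w {u,v,w} hxv h1 h2 dxy dxu dvy duv.symm dxz dxw
          dvz dvw dyz dwy.symm duz duw ?_ ?_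
        · rw [card3' duv duw dvw]; omega
        · intro p' q' hp hq hadj
          simp only [Finset.mem_insert, Finset.mem_singleton] at hp hq
          rcases hp with rfl | rfl | rfl <;> rcases hq with rfl | rfl | rfl <;>
            simp_all [Sym2.eq_iff, SimpleGraph.adj_comm, SimpleGraph.irrefl]
      -- k3 : y~v, z~u : M = {s(x,w), s(y,v), s(z,u)}
      · refine wke3S x w y v z u {u,v,w} hxw h1 h2 dxy dxv dwy dvw.symm dxz dxu
          dwz duw.symm dyz duy.symm dvz duv.symm ?_ ?_
        · rw [card3' duv duw dvw]; omega
        · intro p' q' hp hq hadj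
          simp only [Finset.mem_insert, Finset.mem_singleton] at hp hq
          rcases hp with rfl | rfl | rfl <;> rcases hq with rfl | rfl | rfl <;>
            simp_all [Sym2.eq_iff, SimpleGraph.adj_comm, SimpleGraph.irrefl]
      -- k4 : y~v, z~w : M = {s(x,u), s(y,v), s(z,w)}
      · refine wke3S x u y v z w {u,v,w} hxu h1 h2 dxy dxv duy duv dxz dxw
          duz duw dyz dwy.symm dvz dvw ?_ ?_
        · rw [card3' duv duw dvw]; omega
        · intro p' q' hp hq hadj
          simp only [Finset.mem_insert, Finset.mem_singleton] at hp hq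
          rcases hp with rfl | rfl | rfl <;> rcases hq with rfl | rfl | rfl <;>
            simp_all [Sym2.eq_iff, SimpleGraph.adj_comm, SimpleGraph.irrefl]
      -- k5 : y~w, z~u : M = {s(x,v), s(y,w), s(z,u)}
      · refine wke3S x v y w z u {u,v,w} hxv h1 h2 dxy dxw dvy dvw dxz dxu
          dvz duv.symm dyz duy.symm dwz duw.symm ?_ ?_
        · rw [card3' duv duw dvw]; omega
        · intro p' q' hp hq hadj
          simp only [Finset.mem_insert, Finset.mem_singleton] at hp hq
          rcases hp with rfl | rfl | rfl <;> rcases hq with rfl | rfl | rfl <;>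
            simp_all [Sym2.eq_iff, SimpleGraph.adj_comm, SimpleGraph.irrefl]
      -- k6 : y~w, z~v : M = {s(x,u), s(y,w), s(z,v)}
      · refine wke3S x u y w z v {u,v,w} hxu h1 h2 dxy dxw duy duw dxz dxv
          duz duv dyz dvy.symm dwz dvw.symm ?_ ?_
        · rw [card3' duv duw dvw]; omega
        · intro p' q' hp hq hadj
          simp only [Finset.mem_insert, Finset.mem_singleton] at hp hq
          rcases hp with rfl | rfl | rfl <;> rcases hq with rfl | rfl | rfl <;>
            simp_all [Sym2.eq_iff, SimpleGraph.adj_comm, SimpleGraph.irrefl]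
    · push_neg at hAz
      obtain ⟨b1, b2, b3⟩ := hAz
      refine wke2S y z x u {z,u,v,w} hyz hxu dxy.symm duy.symm dxz.symm duz.symm ?_ ?_
      · rw [card4' duz.symm dvz.symm dwz.symm duv duw dvw]; omega
      · intro p' q' hp hq hadj
        simp only [Finset.mem_insert, Finset.mem_singleton] at hp hq
        rcases hp with rfl | rfl | rfl | rfl <;> rcases hq with rfl | rfl | rfl | rfl <;>
          simp_all [Sym2.eq_iff, SimpleGraph.adj_comm, SimpleGraph.irrefl]
  · push_neg at hAy
    obtain ⟨b1, b2, b3⟩ := hAy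
    refine wke2S y z x u {y,u,v,w} hyz hxu dxy.symm duy.symm dxz.symm duz.symm ?_ ?_
    · rw [card4' duy.symm dvy.symm dwy.symm duv duw dvw]; omega
    · intro p' q' hp hq hadj
      simp only [Finset.mem_insert, Finset.mem_singleton] at hp hq
      rcases hp with rfl | rfl | rfl | rfl <;> rcases hq with rfl | rfl | rfl | rfl <;>
        simp_all [Sym2.eq_iff, SimpleGraph.adj_comm, SimpleGraph.irrefl]

end casesK2


open WkeAux

/-- A finite connected graph on 5 or 6 vertices whose complement has maximum degree
greater than 1 is a weak König--Egerváry graph. -/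
theorem small_graph_wke [Fintype V] [DecidableEq V] (H : SimpleGraph V)
    (hconn : H.Connected) (hcard : Fintype.card V = 5 ∨ Fintype.card V = 6)
    (hdeg : ∃ x : V, 2 ≤ (Hᶜ.neighborSet x).ncard) :
    WKE H := by
  obtain ⟨x, hx2⟩ := hdeg
  have h1lt : 1 < (Hᶜ.neighborSet x).ncard := by omega
  obtain ⟨y, hy, z, hz, hyzne⟩ := (Set.one_lt_ncard (Set.toFinite _)).mp h1lt
  rw [mem_neighborSet, compl_adj] at hy hz
  obtain ⟨dxy, hxy⟩ := hy
  obtain ⟨dxz, hxz⟩ := hz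
  rcases hcard with h5 | h6
  · -- n = 5
    obtain ⟨u, v, hux, huy, huz, hvx, hvy, hvz, huv, huniv⟩ := two_rest h5 x y z dxy dxz hyzne
    by_cases hyz : H.Adj y z
    · obtain ⟨r, hr⟩ := exists_adj hconn (by omega) x
      have hruv : r = u ∨ r = v := by
        rcases huniv r with rfl | rfl | rfl | rfl | rfl
        · exact absurd hr H.irrefl
        · exact absurd hr hxy
        · exact absurd hr hxz
        · exact Or.inl rfl
        · exact Or.inr rfl
      rcases hruv with rfl | rfl
      · refine wke2S y z x r {x,y,z} hyz hr dxy.symm huy.symm dxz.symm huz.symm ?_ ?_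
        · rw [card3' dxy dxz hyzne]; omega
        · intro p' q' hp hq hadj
          simp only [Finset.mem_insert, Finset.mem_singleton] at hp hq
          rcases hp with rfl | rfl | rfl <;> rcases hq with rfl | rfl | rfl <;>
            simp_all [Sym2.eq_iff, SimpleGraph.adj_comm, SimpleGraph.irrefl]
      · refine wke2S y z x r {x,y,z} hyz hr dxy.symm hvy.symm dxz.symm hvz.symm ?_ ?_
        · rw [card3' dxy dxz hyzne]; omega
        · intro p' q' hp hq hadj
          simp only [Finset.mem_insert, Finset.mem_singleton] at hp hq
          rcases hp with rfl | rfl | rfl <;> rcases hq with rfl | rfl | rfl <;>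
            simp_all [Sym2.eq_iff, SimpleGraph.adj_comm, SimpleGraph.irrefl]
    · by_cases h2d : ∃ a b c d, H.Adj a b ∧ H.Adj c d ∧ a ≠ c ∧ a ≠ d ∧ b ≠ c ∧ b ≠ d
      · obtain ⟨a, b, c, d, hab, hcd, n1, n2, n3, n4⟩ := h2d
        refine wke2S a b c d {x,y,z} hab hcd n1 n2 n3 n4 ?_ ?_
        · rw [card3' dxy dxz hyzne]; omega
        · intro p' q' hp hq hadj
          simp only [Finset.mem_insert, Finset.mem_singleton] at hp hq
          rcases hp with rfl | rfl | rfl <;> rcases hq with rfl | rfl | rfl <;>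
            simp_all [Sym2.eq_iff, SimpleGraph.adj_comm, SimpleGraph.irrefl]
      · push_neg at h2d
        have h' : ∀ a b c d, H.Adj a b → H.Adj c d → a = c ∨ a = d ∨ b = c ∨ b = d := by
          intro a b c d hA hB
          by_cases e1 : a = c
          · exact Or.inl e1
          by_cases e2 : a = d
          · exact Or.inr (Or.inl e2)
          by_cases e3 : b = c
          · exact Or.inr (Or.inr (Or.inl e3))
          exact Or.inr (Or.inr (Or.inr (h2d a b c d hA hB e1 e2 e3)))
        exact wke_star hconn (by omega) (star_of_no_two_disjoint hconn (by omega) h')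
  · -- n = 6
    by_cases hyz : H.Adj y z
    · obtain ⟨u, v, w, hux, huy, huz, hvx, hvy, hvz, hwx, hwy, hwz, huv, huw, hvw, huniv⟩ :=
        three_rest h6 x y z dxy dxz hyzne
      have classify : ∀ t, t ≠ x → t ≠ y → t ≠ z →
          (H.Adj x t ∨ (¬H.Adj x t ∧ H.Adj y t ∧ H.Adj z t) ∨ WKE H) := by
        intro t ht1 ht2 ht3
        by_cases a1 : H.Adj x t
        · exact Or.inl a1
        · by_cases a2 : H.Adj y t
          · by_cases a3 : H.Adj z t
            · exact Or.inr (Or.inl ⟨a1, a2, a3⟩)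
            · exact Or.inr (Or.inr (caseI hconn h6 x z t dxz ht1.symm ht3.symm hxz a1 a3))
          · exact Or.inr (Or.inr (caseI hconn h6 x y t dxy ht1.symm ht2.symm hxy a1 a2))
      rcases classify u hux huy huz with hu | ⟨hu1, hu2, hu3⟩ | hwke
      · rcases classify v hvx hvy hvz with hv | ⟨hv1, hv2, hv3⟩ | hwke
        · rcases classify w hwx hwy hwz with hw | ⟨hw1, hw2, hw3⟩ | hwke
          · exact caseK2 h6 x y z u v w hxy hxz hyz hu hv hw dxy dxz hyzne
              huy huz hvy hvz hwy hwz huv huw hvw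
          · -- w in K : caseK3 x y z w u v
            exact caseK3 h6 x y z w u v hxy hxz hw1 hyz hw2 hw3 hu hv
              dxy dxz hyzne hwx hwy hwz hux huy huz hvx hvy hvz huw hvw huv
          · exact hwke
        · rcases classify w hwx hwy hwz with hw | ⟨hw1, hw2, hw3⟩ | hwke
          · -- v in K : caseK3 x y z v u w
            exact caseK3 h6 x y z v u w hxy hxz hv1 hyz hv2 hv3 hu hw
              dxy dxz hyzne hvx hvy hvz hux huy huz hwx hwy hwz huv hvw.symm huw
          · -- v, w in K : caseK4 x y z v w u
            exact caseK4 hconn h6 x y z v w u hxy hxz hyz hv1 hw1 hu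
              dxy dxz hyzne hvx hvy hvz hwx hwy hwz hvw huy huz huv huw
          · exact hwke
        · exact hwke
      · rcases classify v hvx hvy hvz with hv | ⟨hv1, hv2, hv3⟩ | hwke
        · rcases classify w hwx hwy hwz with hw | ⟨hw1, hw2, hw3⟩ | hwke
          · -- u in K : caseK3 x y z u v w
            exact caseK3 h6 x y z u v w hxy hxz hu1 hyz hu2 hu3 hv hw
              dxy dxz hyzne hux huy huz hvx hvy hvz hwx hwy hwz huv.symm huw.symm hvw
          · -- u, w in K : caseK4 x y z u w v
            exact caseK4 hconn h6 x y z u w v hxy hxz hyz hu1 hw1 hv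
              dxy dxz hyzne hux huy huz hwx hwy hwz huw hvy hvz huv.symm hvw
          · exact hwke
        · rcases classify w hwx hwy hwz with hw | ⟨hw1, hw2, hw3⟩ | hwke
          · -- u, v in K : caseK4 x y z u v w
            exact caseK4 hconn h6 x y z u v w hxy hxz hyz hu1 hv1 hw
              dxy dxz hyzne hux huy huz hvx hvy hvz huv hwy hwz huw.symm hvw.symm
          · -- all in K : contradiction with connectivity
            obtain ⟨r, hr⟩ := exists_adj hconn (by omega) x
            rcases huniv r with rfl | rfl | rfl | rfl | rfl | rfl
            · exact absurd hr H.irrefl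
            · exact absurd hr hxy
            · exact absurd hr hxz
            · exact absurd hr hu1
            · exact absurd hr hv1
            · exact absurd hr hw1
          · exact hwke
        · exact hwke
      · exact hwke
    · exact caseI hconn h6 x y z dxy dxz hyzne hxy hxz hyz
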